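/- arXiv:2412.05790 — 4 statements merged into one kernel-verified Lean document; each statement's English description precedes it below -/
import Mathlib

section
/- Let f : ℝᵈ → ℝ be C² such that all Hessians ∇²f(x), x ∈ ℝᵈ, pairwise commute and are simultaneously diagonalizable by a single fixed orthogonal matrix U (i.e., ∇²f(x) = Uᵀ D(x) U with D(x) diagonal for all x). Then there exist functions f₁,…,f_d : ℝ → ℝ such that f(x) = Σᵢ fᵢ((Ux)ᵢ) + f(0) - Σᵢ fᵢ((U·0)ᵢ) for all x; equivalently f is separable in the basis U up to a constant. -/
/-!
Pulling `f` back along the orthogonal change of variables, `h y := f (Uᵀ y)` has Hessian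
`U ∇²f Uᵀ = D`, which is diagonal. Vanishing mixed partials make `∂ᵢh` depend on `yᵢ` alone,
so `h y - Σᵢ h (yᵢ eᵢ)` has all partial derivatives zero and is therefore constant.
-/

open Matrix

/-- The Hessian matrix of `f : (Fin d → ℝ) → ℝ` at `x`, with entries the second
partial derivatives `∂²f/∂xᵢ∂xⱼ (x)`. -/
noncomputable def hessianMatrix {d : ℕ} (f : (Fin d → ℝ) → ℝ) (x : Fin d → ℝ) :
    Matrix (Fin d) (Fin d) ℝ :=
  Matrix.of fun i j =>
    fderiv ℝ (fun y => fderiv ℝ f y (Pi.single j 1)) x (Pi.single i 1)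

theorem ContinuousLinearMap.apply_eq_sum_smul_apply_single {ι F : Type*} [Fintype ι]
    [DecidableEq ι] [NormedAddCommGroup F] [NormedSpace ℝ F]
    (L : (ι → ℝ) →L[ℝ] F) (w : ι → ℝ) : L w = ∑ j, w j • L (Pi.single j 1) := by
  conv_lhs => rw [pi_eq_sum_univ' w, map_sum]
  simp_rw [map_smul]

theorem hessianMatrix_eq_toMatrix₂' {d : ℕ} {f : (Fin d → ℝ) → ℝ} (hf : ContDiff ℝ 2 f)
    (x : Fin d → ℝ) :
    hessianMatrix f x = LinearMap.toMatrix₂' ℝ (fderiv ℝ (fderiv ℝ f) x).toLinearMap₁₂ := by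
  ext i j
  have hdf : DifferentiableAt ℝ (fderiv ℝ f) x :=
    (hf.fderiv_right (m := 1) le_rfl).differentiable one_ne_zero x
  simp [hessianMatrix, fderiv_clm_apply hdf (differentiableAt_const _)]

theorem fderiv_fderiv_comp_clm {E F : Type*} [NormedAddCommGroup E] [NormedSpace ℝ E]
    [NormedAddCommGroup F] [NormedSpace ℝ F] {f : F → ℝ} (hf : ContDiff ℝ 2 f)
    (L : E →L[ℝ] F) (y u v : E) :
    fderiv ℝ (fderiv ℝ (f ∘ L)) y u v = fderiv ℝ (fderiv ℝ f) (L y) (L u) (L v) := by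
  have := congrArg (fun M => M ![u, v]) (L.iteratedFDeriv_comp_right hf y le_rfl)
  simpa [iteratedFDeriv_two_apply] using this

theorem hessianMatrix_comp_mulVec {d : ℕ} {f : (Fin d → ℝ) → ℝ} (hf : ContDiff ℝ 2 f)
    (A : Matrix (Fin d) (Fin d) ℝ) (y : Fin d → ℝ) :
    hessianMatrix (fun y => f (A *ᵥ y)) y = Aᵀ * hessianMatrix f (A *ᵥ y) * A := by
  set L : (Fin d → ℝ) →L[ℝ] (Fin d → ℝ) := LinearMap.toContinuousLinearMap (toLin' A)
  have hfL : ContDiff ℝ 2 (f ∘ L) := hf.comp L.contDiff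
  rw [show (fun y => f (A *ᵥ y)) = f ∘ L from rfl, hessianMatrix_eq_toMatrix₂' hfL,
    hessianMatrix_eq_toMatrix₂' hf]
  have : (fderiv ℝ (fderiv ℝ (f ∘ L)) y).toLinearMap₁₂ =
      (fderiv ℝ (fderiv ℝ f) (A *ᵥ y)).toLinearMap₁₂.compl₁₂ (toLin' A) (toLin' A) := by
    ext u v
    exact fderiv_fderiv_comp_clm hf L y _ _
  rw [this, LinearMap.toMatrix₂'_compl₁₂, LinearMap.toMatrix'_toLin']

theorem apply_add_eq_of_fderiv_apply_eq_zero {E : Type*} [NormedAddCommGroup E]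
    [NormedSpace ℝ E] {g : E → ℝ} (hg : Differentiable ℝ g) {w : E}
    (hzero : ∀ z, fderiv ℝ g z w = 0) (x : E) : g (x + w) = g x := by
  have hline : ∀ t : ℝ, HasDerivAt (fun t : ℝ => g (x + t • w)) (fderiv ℝ g (x + t • w) w) t :=
    fun t => (hg _).hasFDerivAt.comp_hasDerivAt t
      (by simpa using ((hasDerivAt_id t).smul_const w).const_add x)
  simpa using is_const_of_deriv_eq_zero (fun t => (hline t).differentiableAt)
    (fun t => by rw [(hline t).deriv, hzero]) 1 0

section Partials

variable {ι : Type*} [Fintype ι] [DecidableEq ι] {g : (ι → ℝ) → ℝ}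

theorem eq_of_fderiv_single_eq_zero (hg : Differentiable ℝ g)
    (hzero : ∀ y j, fderiv ℝ g y (Pi.single j 1) = 0) (x y : ι → ℝ) : g x = g y :=
  is_const_of_fderiv_eq_zero hg (fun z => by
    ext w
    simp [ContinuousLinearMap.apply_eq_sum_smul_apply_single _ w, hzero]) x y

theorem eq_apply_single_of_fderiv_single_eq_zero (hg : Differentiable ℝ g) (i : ι)
    (hzero : ∀ y, ∀ j ≠ i, fderiv ℝ g y (Pi.single j 1) = 0) (y : ι → ℝ) :
    g y = g (Pi.single i (y i)) := by
  have hw : ∀ z, fderiv ℝ g z (y - Pi.single i (y i)) = 0 := by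
    intro z
    rw [ContinuousLinearMap.apply_eq_sum_smul_apply_single]
    refine Finset.sum_eq_zero fun j _ => ?_
    by_cases hji : j = i
    · simp [hji]
    · simp [hzero z j hji]
  simpa using apply_add_eq_of_fderiv_apply_eq_zero hg hw (Pi.single i (y i))

end Partials

theorem sub_sum_apply_single_eq_of_isDiag_hessianMatrix {d : ℕ} {h : (Fin d → ℝ) → ℝ}
    (hh : ContDiff ℝ 2 h) (hdiag : ∀ z, (hessianMatrix h z).IsDiag) (x y : Fin d → ℝ) :
    h x - ∑ i, h (Pi.single i (x i)) = h y - ∑ i, h (Pi.single i (y i)) := by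
  have hd : Differentiable ℝ h := hh.differentiable two_ne_zero
  have hpartial (j : Fin d) (y : Fin d → ℝ) :
      fderiv ℝ h y (Pi.single j 1) = fderiv ℝ h (Pi.single j (y j)) (Pi.single j 1) :=
    eq_apply_single_of_fderiv_single_eq_zero
      (fun z => ((hh.fderiv_right (m := 1) le_rfl).differentiable one_ne_zero z).clm_apply
        (differentiableAt_const _)) j (fun z i hij => hdiag z hij) y
  let P (i : Fin d) : (Fin d → ℝ) →L[ℝ] (Fin d → ℝ) :=
    (ContinuousLinearMap.single ℝ (fun _ => ℝ) i).comp (ContinuousLinearMap.proj i)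
  have hderiv (y : Fin d → ℝ) : HasFDerivAt (fun y => h y - ∑ i, h (P i y))
      (fderiv ℝ h y - ∑ i, (fderiv ℝ h (P i y)).comp (P i)) y :=
    (hd y).hasFDerivAt.sub (HasFDerivAt.fun_sum fun i _ =>
      (hd (P i y)).hasFDerivAt.comp y (P i).hasFDerivAt)
  refine eq_of_fderiv_single_eq_zero (fun y => (hderiv y).differentiableAt)
    (fun y j => ?_) x y
  rw [(hderiv y).fderiv, _root_.sub_apply, _root_.sum_apply,
    Finset.sum_eq_single j, hpartial]
  · simp [P]
  · intro i _ hij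
    simp [P, Pi.single_eq_of_ne hij]
  · simp

/-- If `f` is `C²` and all its Hessians are simultaneously diagonalized
by a single fixed orthogonal matrix `U` (i.e. `∇²f(x) = Uᵀ D(x) U` with `D(x)`
diagonal for all `x`), then `f` is separable in the basis `U` up to a constant:
there are univariate functions `fᵢ` with
`f x = Σᵢ fᵢ((Ux)ᵢ) + f 0 - Σᵢ fᵢ((U·0)ᵢ)` for all `x`. -/
theorem separable_of_commuting_hessians {d : ℕ}
    (f : (Fin d → ℝ) → ℝ) (hf : ContDiff ℝ 2 f)
    (U : Matrix (Fin d) (Fin d) ℝ) (hU : Uᵀ * U = 1)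
    (D : (Fin d → ℝ) → Matrix (Fin d) (Fin d) ℝ)
    (hD : ∀ x, (D x).IsDiag)
    (hdiag : ∀ x, hessianMatrix f x = Uᵀ * D x * U) :
    ∃ g : Fin d → ℝ → ℝ, ∀ x : Fin d → ℝ,
      f x = (∑ i, g i (U.mulVec x i)) + f 0 - ∑ i, g i (U.mulVec 0 i) := by
  have hUUt : U * Uᵀ = 1 := mul_eq_one_comm.mp hU
  let h : (Fin d → ℝ) → ℝ := fun y => f (Uᵀ *ᵥ y)
  have hh : ContDiff ℝ 2 h := hf.comp (LinearMap.toContinuousLinearMap (toLin' Uᵀ)).contDiff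
  have hh_diag (z : Fin d → ℝ) : (hessianMatrix h z).IsDiag := by
    rw [hessianMatrix_comp_mulVec hf, hdiag, transpose_transpose, ← Matrix.mul_assoc,
      ← Matrix.mul_assoc, hUUt, Matrix.one_mul, Matrix.mul_assoc, hUUt, Matrix.mul_one]
    exact hD _
  have hfh (x : Fin d → ℝ) : f x = h (U *ᵥ x) := by simp [h, mulVec_mulVec, hU]
  refine ⟨fun i t => h (Pi.single i t), fun x => ?_⟩
  have := sub_sum_apply_single_eq_of_isDiag_hessianMatrix hh hh_diag (U *ᵥ x) (U *ᵥ 0)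
  rw [hfh x, hfh 0]
  linarith
end

section
/- For any a, b > 0, ∫₀¹ (t/a + (1-t)/b)⁻¹ dμ(t) = √(ab), where μ is the Arcsine distribution on (0,1), i.e., the weighted harmonic mean H_t(a,b) = (t a⁻¹ + (1-t) b⁻¹)⁻¹ averaged against Arcsine(0,1) equals the geometric mean of a and b. -/
/-!
The Möbius map `g t = b t / (a (1 - t) + b t)` fixes `0` and `1`, and
`g' / √(g (1 - g)) = √(ab) / ((a (1 - t) + b t) √(t (1 - t)))`. Hence `H_t(a, b)` times the
Arcsine density is `√(ab)` times the derivative of `Φ ∘ g`, where `Φ x = (2/π) arcsin √x` is the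
Arcsine distribution function, and the fundamental theorem of calculus on `[0, 1]` gives
`√(ab) (Φ 1 - Φ 0) = √(ab)`. The integrand is nonnegative, which gives its integrability.
-/

open Real Set MeasureTheory

/-- The Arcsine probability measure on `(0, 1)`, with density `1/(π √(t(1-t)))`. -/
noncomputable def arcsine01 : Measure ℝ :=
  MeasureTheory.volume.withDensity (fun t =>
    ENNReal.ofReal (Set.indicator (Set.Ioo (0 : ℝ) 1)
      (fun t => 1 / (Real.pi * Real.sqrt (t * (1 - t)))) t))

theorem integral_arcsine01 (f : ℝ → ℝ) :
    ∫ t, f t ∂arcsine01 = ∫ t in (0 : ℝ)..1, f t / (π * √(t * (1 - t))) := by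
  have hdensity_nonneg :
      ∀ t, 0 ≤ (Ioo (0 : ℝ) 1).indicator (fun t => 1 / (π * √(t * (1 - t)))) t :=
    fun t => indicator_nonneg (fun _ _ => by positivity) t
  rw [arcsine01, integral_withDensity_eq_integral_toReal_smul
    (Measurable.indicator (by fun_prop) measurableSet_Ioo).ennreal_ofReal
    (ae_of_all _ fun _ => ENNReal.ofReal_lt_top), intervalIntegral.integral_of_le zero_le_one,
    integral_Ioc_eq_integral_Ioo, ← integral_indicator measurableSet_Ioo]
  congr 1 with t
  rw [ENNReal.toReal_ofReal (hdensity_nonneg t), smul_eq_mul, ← indicator_mul_left]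
  simp only [indicator, div_eq_inv_mul, one_mul, mul_comm]

theorem hasDerivAt_arcsin_sqrt {x : ℝ} (hx₀ : 0 < x) (hx₁ : x < 1) :
    HasDerivAt (fun x => arcsin √x) (1 / (2 * √(x * (1 - x)))) x := by
  have hsqrt_ne_one : √x ≠ 1 := by rw [Ne, sqrt_eq_one]; exact hx₁.ne
  have hsqrt_ne_neg_one : √x ≠ -1 := by linarith [sqrt_nonneg x]
  refine ((hasDerivAt_arcsin hsqrt_ne_neg_one hsqrt_ne_one).comp x
    (hasDerivAt_sqrt hx₀.ne')).congr_deriv ?_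
  rw [sq_sqrt hx₀.le, sqrt_mul hx₀.le]
  field_simp

theorem hasDerivAt_mul_div_mul_one_sub_add_mul (a b t : ℝ) (hv : a * (1 - t) + b * t ≠ 0) :
    HasDerivAt (fun t => b * t / (a * (1 - t) + b * t))
      (a * b / (a * (1 - t) + b * t) ^ 2) t := by
  have hnum : HasDerivAt (fun t => b * t) (b * 1) t := (hasDerivAt_id t).const_mul b
  have hden : HasDerivAt (fun t => a * (1 - t) + b * t) (a * -1 + b * 1) t :=
    (((hasDerivAt_id t).const_sub 1).const_mul a).add ((hasDerivAt_id t).const_mul b)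
  exact (hnum.div hden hv).congr_deriv (by ring)

theorem mul_one_sub_add_mul_pos {a b t : ℝ} (ha : 0 < a) (hb : 0 < b) (ht : t ∈ Icc (0 : ℝ) 1) :
    0 < a * (1 - t) + b * t := by
  obtain ⟨ht₀, ht₁⟩ := ht
  nlinarith [mul_le_mul_of_nonneg_right (min_le_left a b) (sub_nonneg.2 ht₁),
    mul_le_mul_of_nonneg_right (min_le_right a b) ht₀, lt_min ha hb]

noncomputable def harmonicMeanPrimitive (a b t : ℝ) : ℝ :=
  2 * √(a * b) / π * arcsin √(b * t / (a * (1 - t) + b * t))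

theorem hasDerivAt_harmonicMeanPrimitive {a b t : ℝ} (ha : 0 < a) (hb : 0 < b)
    (ht : t ∈ Ioo (0 : ℝ) 1) :
    HasDerivAt (harmonicMeanPrimitive a b)
      ((t / a + (1 - t) / b)⁻¹ / (π * √(t * (1 - t)))) t := by
  obtain ⟨ht₀, ht₁⟩ := ht
  set v := a * (1 - t) + b * t
  have hv : 0 < v := mul_one_sub_add_mul_pos ha hb ⟨ht₀.le, ht₁.le⟩
  have hg₀ : 0 < b * t / v := by positivity
  have hg₁ : b * t / v < 1 := by rw [div_lt_one hv]; nlinarith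
  have hg : b * t / v * (1 - b * t / v) = a * b * (t * (1 - t)) / v ^ 2 := by
    field_simp; ring
  refine (((hasDerivAt_arcsin_sqrt hg₀ hg₁).comp t
    (hasDerivAt_mul_div_mul_one_sub_add_mul a b t hv.ne')).const_mul
      (2 * √(a * b) / π)).congr_deriv ?_
  have hab : √(a * b) ^ 2 = a * b := sq_sqrt (by positivity)
  have htt : 0 < √(t * (1 - t)) := sqrt_pos.2 (by nlinarith)
  rw [hg, sqrt_div (by positivity), sqrt_sq hv.le, sqrt_mul (mul_pos ha hb).le]
  field_simp
  ring

theorem continuousOn_harmonicMeanPrimitive {a b : ℝ} (ha : 0 < a) (hb : 0 < b) :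
    ContinuousOn (harmonicMeanPrimitive a b) (Icc 0 1) :=
  continuousOn_const.mul <| continuous_arcsin.comp_continuousOn <|
    (continuousOn_id.const_smul b |>.div (by fun_prop)
      fun _ ht => (mul_one_sub_add_mul_pos ha hb ht).ne').sqrt

theorem harmonicMeanPrimitive_zero (a b : ℝ) : harmonicMeanPrimitive a b 0 = 0 := by
  simp [harmonicMeanPrimitive]

theorem harmonicMeanPrimitive_one {a b : ℝ} (hb : 0 < b) :
    harmonicMeanPrimitive a b 1 = √(a * b) := by
  simp only [harmonicMeanPrimitive, mul_one, sub_self, mul_zero, zero_add, div_self hb.ne',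
    sqrt_one, arcsin_one]
  field_simp

/-- Arcsine integral representation of the geometric mean:
for `a, b > 0`, the Arcsine(0,1)-average of the weighted harmonic mean
`H_t(a,b) = (t/a + (1-t)/b)⁻¹` equals `√(ab)`. -/
theorem arcsine_harmonic_mean (a b : ℝ) (ha : 0 < a) (hb : 0 < b) :
    ∫ t, (t / a + (1 - t) / b)⁻¹ ∂arcsine01 = Real.sqrt (a * b) := by
  have hcont := continuousOn_harmonicMeanPrimitive ha hb
  have hderiv := fun t ht => hasDerivAt_harmonicMeanPrimitive (t := t) ha hb ht
  have hnonneg : ∀ t ∈ Ioo (0 : ℝ) 1, 0 ≤ (t / a + (1 - t) / b)⁻¹ / (π * √(t * (1 - t))) :=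
    fun t ⟨_, ht₁⟩ => by have := sub_pos.2 ht₁; positivity
  have hint : IntervalIntegrable (fun t => (t / a + (1 - t) / b)⁻¹ / (π * √(t * (1 - t))))
      volume 0 1 :=
    (intervalIntegrable_iff_integrableOn_Ioc_of_le zero_le_one).2
      (intervalIntegral.integrableOn_deriv_of_nonneg hcont hderiv hnonneg)
  rw [integral_arcsine01, intervalIntegral.integral_eq_sub_of_hasDerivAt_of_le zero_le_one hcont
    hderiv hint, harmonicMeanPrimitive_one hb, harmonicMeanPrimitive_zero, sub_zero]
end

section
/- Let f(x) = (M/2)x² and run gradient descent x_{n+1} = x_n - β_n⁻¹ M x_n with β_n i.i.d. Arcsine(m,M), where 0 < m < M and κ = M/m. Then for every n, E[x_n] = (1 - √κ)ⁿ x₀, and consequently E[|x_n|/|x₀|]^{1/n} ≥ √κ - 1 for any x₀ ≠ 0. -/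
/-!
The iterates are `x_n = ∏_{j<n} (1 - M/β_j) · x₀`, so by independence
`E[x_n] = (1 - M · E[1/β])ⁿ x₀`. For the Arcsine law on `(m, M)`, `E[1/β] = 1/√(mM)`:
the density times `1/β` has the explicit primitive
`arcsin(((M+m)β - 2mM)/((M-m)β)) / (π√(mM))`, whose argument runs from `-1` to `1` on `[m, M]`.
The lower bound on `E|x_n|` then follows from `|E[x_n]| ≤ E|x_n|` and `|1 - √κ| = √κ - 1`.
-/

open Real Set MeasureTheory ProbabilityTheory

/-- The Arcsine probability measure on `(m, M)`, with density
`1 / (π √((M-β)(β-m)))` on `(m, M)`. -/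
noncomputable def arcsineMeasure (m M : ℝ) : Measure ℝ :=
  MeasureTheory.volume.withDensity (fun β =>
    ENNReal.ofReal (Set.indicator (Set.Ioo m M)
      (fun β => 1 / (Real.pi * Real.sqrt ((M - β) * (β - m)))) β))

lemma eq_prod_range_mul_of_succ_eq_mul {R : Type*} [CommMonoid R] {x a : ℕ → R}
    (h : ∀ n, x (n + 1) = a n * x n) (n : ℕ) : x n = (∏ j ∈ Finset.range n, a j) * x 0 := by
  induction n with
  | zero => simp
  | succ n ih => rw [h, ih, Finset.prod_range_succ]; ac_rfl

lemma integral_prod_range_eq_prod_integral {Ω : Type*} [MeasurableSpace Ω] {P : Measure Ω}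
    {Y : ℕ → Ω → ℝ} (hY : iIndepFun Y P) (hmeas : ∀ j, AEStronglyMeasurable (Y j) P)
    (n : ℕ) :
    ∫ ω, ∏ j ∈ Finset.range n, Y j ω ∂P = ∏ j ∈ Finset.range n, ∫ ω, Y j ω ∂P := by
  have hYn := hY.precomp (g := (Fin.val : Fin n → ℕ)) Fin.val_injective
  simp only [← Fin.prod_univ_eq_prod_range]
  exact hYn.integral_fun_prod_eq_prod_integral fun j => hmeas j

lemma withDensity_ofReal_eq_withDensity_toNNReal {α : Type*} [MeasurableSpace α]
    (μ : Measure α) (f : α → ℝ) :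
    μ.withDensity (fun x => ENNReal.ofReal (f x)) =
      μ.withDensity (fun x => ((f x).toNNReal : ENNReal)) :=
  rfl

lemma integrable_withDensity_ofReal_iff {α : Type*} [MeasurableSpace α] {μ : Measure α}
    {f : α → ℝ} (hf : Measurable f) (hf0 : ∀ x, 0 ≤ f x) {g : α → ℝ} :
    Integrable g (μ.withDensity fun x => ENNReal.ofReal (f x)) ↔
      Integrable (fun x => f x * g x) μ := by
  rw [withDensity_ofReal_eq_withDensity_toNNReal,
    integrable_withDensity_iff_integrable_smul hf.real_toNNReal]
  simp only [NNReal.smul_def, Real.coe_toNNReal _ (hf0 _), smul_eq_mul]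

lemma integral_withDensity_ofReal {α : Type*} [MeasurableSpace α] {μ : Measure α}
    {f : α → ℝ} (hf : Measurable f) (hf0 : ∀ x, 0 ≤ f x) (g : α → ℝ) :
    ∫ x, g x ∂(μ.withDensity fun x => ENNReal.ofReal (f x)) = ∫ x, f x * g x ∂μ := by
  rw [withDensity_ofReal_eq_withDensity_toNNReal,
    integral_withDensity_eq_integral_smul hf.real_toNNReal]
  simp only [NNReal.smul_def, Real.coe_toNNReal _ (hf0 _), smul_eq_mul]

section Arcsine

noncomputable def arcsineDensity (m M x : ℝ) : ℝ := 1 / (π * √((M - x) * (x - m)))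

noncomputable def arcsineInvPrimitive (m M x : ℝ) : ℝ :=
  arcsin (((M + m) * x - 2 * m * M) / ((M - m) * x)) / (π * √(m * M))

variable {m M : ℝ}

lemma hasDerivAt_arcsineInvPrimitive (hm : 0 < m) {x : ℝ} (hx : x ∈ Ioo m M) :
    HasDerivAt (arcsineInvPrimitive m M) (arcsineDensity m M x * x⁻¹) x := by
  obtain ⟨hmx, hxM⟩ := hx
  unfold arcsineDensity
  have hx0 : 0 < x := hm.trans hmx
  have hMm : M - m ≠ 0 := by linarith
  have hMmx : 0 < (M - m) * x := mul_pos (by linarith) hx0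
  set u : ℝ → ℝ := fun x => ((M + m) * x - 2 * m * M) / ((M - m) * x)
  set r := √(m * M)
  set s := √((M - x) * (x - m))
  have hr : 0 < r := sqrt_pos.2 (by nlinarith)
  have hs : 0 < s := sqrt_pos.2 (by nlinarith)
  have hr2 : r ^ 2 = m * M := sq_sqrt (by nlinarith)
  have hs2 : s ^ 2 = (M - x) * (x - m) := sq_sqrt (by nlinarith)
  have hu : HasDerivAt u (2 * m * M / ((M - m) * x ^ 2)) x := by
    have := (((hasDerivAt_id x).const_mul (M + m)).sub_const (2 * m * M)).div
      ((hasDerivAt_id x).const_mul (M - m)) hMmx.ne'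
    refine this.congr_deriv ?_
    simp only [id]
    field_simp
    ring
  -- `(M-m)²x² - ((M+m)x - 2mM)² = 4mM(M-x)(x-m)`
  have h1u : 1 - u x ^ 2 = (2 * r * s / ((M - m) * x)) ^ 2 := by
    simp only [u]; field_simp; linear_combination (-4 * s ^ 2) * hr2 - 4 * m * M * hs2
  have hsqrt : 0 < 2 * r * s / ((M - m) * x) := by positivity
  have hu1 : u x ≠ 1 ∧ u x ≠ -1 := by
    constructor <;> rintro h <;> nlinarith [h1u, h, hsqrt]
  refine (((hasDerivAt_arcsin hu1.2 hu1.1).comp x hu).div_const (π * r)).congr_deriv ?_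
  rw [h1u, sqrt_sq hsqrt.le]
  field_simp
  linear_combination -hr2

lemma continuousOn_arcsineInvPrimitive (hm : 0 < m) (hmM : m < M) :
    ContinuousOn (arcsineInvPrimitive m M) (Icc m M) := by
  refine (continuous_arcsin.comp_continuousOn ?_).div_const _
  refine ContinuousOn.div (by fun_prop) (by fun_prop) fun x hx => ?_
  exact (mul_pos (sub_pos.2 hmM) (hm.trans_le hx.1)).ne'

lemma arcsineDensity_nonneg (x : ℝ) : 0 ≤ arcsineDensity m M x := by
  unfold arcsineDensity; positivity

lemma integrableOn_arcsineDensity_mul_inv (hm : 0 < m) (hmM : m < M) :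
    IntegrableOn (fun x => arcsineDensity m M x * x⁻¹) (Ioc m M) :=
  intervalIntegral.integrableOn_deriv_of_nonneg (continuousOn_arcsineInvPrimitive hm hmM)
    (fun _ hx => hasDerivAt_arcsineInvPrimitive hm hx)
    (fun x hx => mul_nonneg (arcsineDensity_nonneg x) (inv_nonneg.2 (hm.trans hx.1).le))

lemma setIntegral_arcsineDensity_mul_inv (hm : 0 < m) (hmM : m < M) :
    ∫ x in Ioo m M, arcsineDensity m M x * x⁻¹ = (√(m * M))⁻¹ := by
  rw [← integral_Ioc_eq_integral_Ioo, ← intervalIntegral.integral_of_le hmM.le,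
    intervalIntegral.integral_eq_sub_of_hasDerivAt_of_le hmM.le
      (continuousOn_arcsineInvPrimitive hm hmM) (fun _ hx => hasDerivAt_arcsineInvPrimitive hm hx)
      ((intervalIntegrable_iff_integrableOn_Ioc_of_le hmM.le).2
        (integrableOn_arcsineDensity_mul_inv hm hmM))]
  have hMm : M - m ≠ 0 := sub_ne_zero.2 hmM.ne'
  have hupper : ((M + m) * M - 2 * m * M) / ((M - m) * M) = 1 := by
    field_simp [(hm.trans hmM).ne']; ring
  have hlower : ((M + m) * m - 2 * m * M) / ((M - m) * m) = -1 := by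
    field_simp [hm.ne']; ring
  simp only [arcsineInvPrimitive, hupper, hlower, arcsin_one, arcsin_neg]
  have : 0 < √(m * M) := sqrt_pos.2 (mul_pos hm (hm.trans hmM))
  field_simp
  ring

lemma arcsineMeasure_eq_withDensity :
    arcsineMeasure m M =
      (volume.restrict (Ioo m M)).withDensity fun x => ENNReal.ofReal (arcsineDensity m M x) := by
  rw [← withDensity_indicator measurableSet_Ioo, arcsineMeasure]
  congr 1
  ext x
  by_cases hx : x ∈ Ioo m M <;> simp [hx, arcsineDensity]

lemma measurable_arcsineDensity : Measurable (arcsineDensity m M) := by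
  unfold arcsineDensity; fun_prop

lemma integrable_inv_arcsineMeasure (hm : 0 < m) (hmM : m < M) :
    Integrable (fun b => b⁻¹) (arcsineMeasure m M) := by
  rw [arcsineMeasure_eq_withDensity,
    integrable_withDensity_ofReal_iff measurable_arcsineDensity arcsineDensity_nonneg]
  exact (integrableOn_arcsineDensity_mul_inv hm hmM).mono_set Ioo_subset_Ioc_self

lemma integral_inv_arcsineMeasure (hm : 0 < m) (hmM : m < M) :
    ∫ b, b⁻¹ ∂arcsineMeasure m M = (√(m * M))⁻¹ := by
  rw [arcsineMeasure_eq_withDensity,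
    integral_withDensity_ofReal measurable_arcsineDensity arcsineDensity_nonneg,
    setIntegral_arcsineDensity_mul_inv hm hmM]

lemma integral_one_sub_inv_mul_of_map_eq_arcsineMeasure {Ω : Type*} [MeasurableSpace Ω]
    {P : Measure Ω} [IsProbabilityMeasure P] {β : Ω → ℝ} (hβ : Measurable β)
    (hmap : P.map β = arcsineMeasure m M) (hm : 0 < m) (hmM : m < M) :
    ∫ ω, (1 - (β ω)⁻¹ * M) ∂P = 1 - √(M / m) := by
  have hint : Integrable (fun ω => (β ω)⁻¹) P := by
    have := integrable_inv_arcsineMeasure hm hmM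
    rw [← hmap] at this
    exact this.comp_measurable hβ
  have hmean : ∫ ω, (β ω)⁻¹ ∂P = (√(m * M))⁻¹ := by
    rw [← integral_inv_arcsineMeasure hm hmM, ← hmap,
      integral_map hβ.aemeasurable (by fun_prop)]
  have hM : 0 < M := hm.trans hmM
  rw [integral_sub (integrable_const 1) (hint.mul_const M), integral_const, integral_mul_const,
    hmean, probReal_univ, one_smul, sqrt_mul hm.le, sqrt_div hM.le]
  have : 0 < √m := sqrt_pos.2 hm
  have : 0 < √M := sqrt_pos.2 hM
  field_simp
  linear_combination sq_sqrt hM.le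

end Arcsine

/-- running gradient descent on `f(x) = (M/2)x²` with i.i.d. inverse
stepsizes `β_n ~ Arcsine(m, M)` yields `E[x_n] = (1 - √κ)ⁿ x₀` for every `n`,
and consequently `E[|x_n|/|x₀|]^{1/n} ≥ √κ - 1` for any `x₀ ≠ 0` and `n ≥ 1`,
where `κ = M/m`. -/
theorem gd_quadratic_unstable_in_mean
    {Ω : Type*} [MeasurableSpace Ω] (P : Measure Ω) [IsProbabilityMeasure P]
    (m M : ℝ) (hm : 0 < m) (hmM : m < M)
    (beta : ℕ → Ω → ℝ) (hmeas : ∀ n, Measurable (beta n))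
    (hindep : iIndepFun beta P)
    (hdist : ∀ n, P.map (beta n) = arcsineMeasure m M)
    (x₀ : ℝ) (x : ℕ → Ω → ℝ)
    (hx0 : ∀ ω, x 0 ω = x₀)
    (hrec : ∀ n ω, x (n + 1) ω = x n ω - (beta n ω)⁻¹ * (M * x n ω)) :
    (∀ n, ∫ ω, x n ω ∂P = (1 - Real.sqrt (M / m)) ^ n * x₀) ∧
    (x₀ ≠ 0 → ∀ n : ℕ, 1 ≤ n →
      Real.sqrt (M / m) - 1 ≤ (∫ ω, |x n ω| / |x₀| ∂P) ^ ((1 : ℝ) / n)) := by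
  have hx : ∀ n ω, x n ω = (∏ j ∈ Finset.range n, (1 - (beta j ω)⁻¹ * M)) * x₀ := fun n ω => by
    rw [← hx0 ω]
    exact eq_prod_range_mul_of_succ_eq_mul (x := fun n => x n ω)
      (fun k => by simp only [hrec]; ring) n
  have hfactors : iIndepFun (fun j ω => 1 - (beta j ω)⁻¹ * M) P :=
    hindep.comp (fun _ b => 1 - b⁻¹ * M) fun _ => by fun_prop
  have hmean : ∀ n, ∫ ω, x n ω ∂P = (1 - √(M / m)) ^ n * x₀ := fun n => by
    simp_rw [hx n]
    rw [integral_mul_const,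
      integral_prod_range_eq_prod_integral hfactors (fun j => by fun_prop),
      Finset.prod_congr rfl fun j _ =>
        integral_one_sub_inv_mul_of_map_eq_arcsineMeasure (hmeas j) (hdist j) hm hmM,
      Finset.prod_const, Finset.card_range]
  refine ⟨hmean, fun hx₀ n hn => ?_⟩
  have hκ : 1 < √(M / m) := lt_sqrt_of_sq_lt (by rw [one_pow, one_lt_div hm]; exact hmM)
  have hbound : (√(M / m) - 1) ^ n ≤ ∫ ω, |x n ω| / |x₀| ∂P := by
    rw [integral_div, le_div_iff₀ (abs_pos.2 hx₀)]
    calc (√(M / m) - 1) ^ n * |x₀| = |∫ ω, x n ω ∂P| := by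
          rw [hmean, abs_mul, abs_pow, abs_sub_comm, abs_of_pos (sub_pos.2 hκ)]
      _ ≤ ∫ ω, |x n ω| ∂P := abs_integral_le_integral_abs
  rw [one_div, le_rpow_inv_iff_of_pos (sub_nonneg.2 hκ.le)
    (integral_nonneg fun _ => by positivity) (by positivity), rpow_natCast]
  exact hbound
end

section
/- Let λ ∈ [m, M] with 0 < m ≤ M, and let α = a + bi ∈ ℂ. Let ã be the projection of the real part a onto the interval [1/M, 1/m]. Then |1 - λ ã| ≤ |1 - λ α|. -/
/-!
Both sides are controlled by the real part: `|1 - λ ã| ≤ |1 - λ a| = |Re (1 - λ α)| ≤ |1 - λ α|`.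
The first inequality holds because `1/λ ∈ [1/M, 1/m]` and projecting onto an interval does not
increase the distance to a point of that interval, so `|1 - λ ã| = λ |1/λ - ã| ≤ λ |1/λ - a|`.
-/

open Complex

theorem abs_max_min_sub_le {α : Type*} [AddCommGroup α] [LinearOrder α] [IsOrderedAddMonoid α]
    {lo hi c : α} (hlo : lo ≤ c) (hhi : c ≤ hi) (a : α) :
    |max (min a hi) lo - c| ≤ |a - c| := by
  calc |max (min a hi) lo - c| = |max (min a hi) lo - max (min c hi) lo| := by
        rw [min_eq_left hhi, max_eq_left hlo]
    _ ≤ |min a hi - min c hi| := abs_max_sub_max_le_abs _ _ _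
    _ ≤ |a - c| := by
        simpa only [sub_self, abs_zero, max_eq_left (abs_nonneg (a - c))]
          using abs_min_sub_min_le_max a hi c hi

theorem abs_one_sub_mul_max_min_le {lam lo hi : ℝ} (hlam : 0 < lam) (hlo : lo ≤ 1 / lam)
    (hhi : 1 / lam ≤ hi) (a : ℝ) :
    |1 - lam * max (min a hi) lo| ≤ |1 - lam * a| := by
  have scale (x : ℝ) : |1 - lam * x| = lam * |x - 1 / lam| := by
    rw [← abs_of_pos hlam, ← abs_mul, abs_of_pos hlam, ← abs_neg]
    congr 1
    field_simp
    ring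
  rw [scale, scale]
  exact mul_le_mul_of_nonneg_left (abs_max_min_sub_le hlo hhi a) hlam.le

theorem abs_one_sub_mul_le_norm (lam a b : ℝ) :
    |1 - lam * a| ≤ ‖1 - (lam : ℂ) * (a + b * I)‖ := by
  simpa using abs_re_le_norm (1 - (lam : ℂ) * (a + b * I))

theorem projected_stepsize_le_general (m M lam : ℝ) (hm : 0 < m)
    (hlam : lam ∈ Set.Icc m M) (a b : ℝ) :
    |1 - lam * (max (min a (1/m)) (1/M))|
      ≤ ‖1 - (lam : ℂ) * (a + b * Complex.I)‖ := by
  obtain ⟨hmlam, hlamM⟩ := hlam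
  have hlam : 0 < lam := hm.trans_le hmlam
  calc |1 - lam * (max (min a (1/m)) (1/M))|
      ≤ |1 - lam * a| :=
        abs_one_sub_mul_max_min_le hlam (one_div_le_one_div_of_le hlam hlamM)
          (one_div_le_one_div_of_le hm hmlam) a
    _ ≤ ‖1 - (lam : ℂ) * (a + b * Complex.I)‖ := abs_one_sub_mul_le_norm lam a b

/-- for `λ ∈ [m, M]` with `0 < m ≤ M` and `α = a + b i ∈ ℂ`, with
`ã` the projection of `a` onto `[1/M, 1/m]`, one has `|1 - λ ã| ≤ |1 - λ α|`. -/
theorem projected_stepsize_le (m M lam : ℝ) (hm : 0 < m) (hmM : m ≤ M)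
    (hlam : lam ∈ Set.Icc m M) (a b : ℝ) :
    |1 - lam * (max (min a (1/m)) (1/M))|
      ≤ ‖1 - (lam : ℂ) * (a + b * Complex.I)‖ :=
  projected_stepsize_le_general m M lam hm hlam a b
end
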